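/- For every c > 0 and every L̄ > 0 there exists a constant C such that for all ℓ ∈ (0, L̄] the function Y_c(ℓ) = 2·arctan( e^c · tan( (1/2)·arctan(sinh(ℓ/2)) ) ) is differentiable and satisfies | Y_c(ℓ) − e^c·ℓ/2 | ≤ C·ℓ³ and | (d/dℓ)Y_c(ℓ) − e^c/2 | ≤ C·ℓ². -/

import Mathlib

/-!
By the half-angle formula `tan (θ/2) = sin θ / (1 + cos θ)` and `cos (arctan (sinh x)) = 1 / cosh x`,
`Y_c(ℓ) = 2 arctan (e^c q(ℓ/2))` with `q = sinh / (cosh + 1)`, and `q' = 1 / (cosh + 1)`.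
This gives `Y_c' = e^c (K + 1) / ((K + 1)² + e^{2c} S²)` with `K = cosh (ℓ/2)`, `S = sinh (ℓ/2)`,
and since `K² - S² = 1`, `Y_c' - e^c/2 = -e^c (1 + e^{2c}) S² / (2 ((K + 1)² + e^{2c} S²))`,
which is `O(ℓ²)`. As `Y_c(0) = 0`, the mean value inequality turns this into
`Y_c(ℓ) - e^c ℓ/2 = O(ℓ³)`.
-/

open Real

/-- `Y_c(ℓ) = 2 arctan(e^c · tan((1/2) arctan(sinh(ℓ/2))))`; geometrically
`π/2 − Y_c(ℓ) = (ℓ/(2π)) Z_c(ℓ)` where `{Z_c(ℓ)}×S¹` is the circle in the standard collar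
around a geodesic of length `ℓ` at hyperbolic distance `c` from the collar boundary. -/
noncomputable def Yc (c ℓ : ℝ) : ℝ :=
  2 * Real.arctan (Real.exp c * Real.tan ((1 / 2) * Real.arctan (Real.sinh (ℓ / 2))))

lemma tan_half_eq_sin_div_one_add_cos {θ : ℝ} (h : cos (θ / 2) ≠ 0) :
    tan (θ / 2) = sin θ / (1 + cos θ) := by
  rw [tan_eq_sin_div_cos, show θ = 2 * (θ / 2) by ring, sin_two_mul, cos_two_mul]
  field_simp
  ring

lemma tan_half_arctan_sinh (x : ℝ) : tan (arctan (sinh x) / 2) = sinh x / (cosh x + 1) := by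
  have hcos : cos (arctan (sinh x) / 2) ≠ 0 := by
    have := arctan_mem_Ioo (sinh x)
    exact (cos_pos_of_mem_Ioo ⟨by linarith [this.1, pi_pos], by linarith [this.2, pi_pos]⟩).ne'
  have hsqrt : √(1 + sinh x ^ 2) = cosh x := by
    rw [← cosh_sq', sqrt_sq (cosh_pos x).le]
  rw [tan_half_eq_sin_div_one_add_cos hcos, sin_arctan, cos_arctan, hsqrt]
  field_simp [(cosh_pos x).ne']

lemma hasDerivAt_sinh_div_cosh_add_one (x : ℝ) :
    HasDerivAt (fun y => sinh y / (cosh y + 1)) (1 / (cosh x + 1)) x := by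
  have hK : cosh x + 1 ≠ 0 := by positivity
  refine ((hasDerivAt_sinh x).div ((hasDerivAt_cosh x).add_const 1) hK).congr_deriv ?_
  field_simp
  linear_combination cosh_sq_sub_sinh_sq x

lemma abs_sinh_le_cosh_mul_abs {x M : ℝ} (hx : |x| ≤ M) : |sinh x| ≤ cosh M * |x| := by
  have hmvt := norm_image_sub_le_of_norm_deriv_le_segment' (f := sinh) (C := cosh M)
    (fun y _ => (hasDerivAt_sinh y).hasDerivWithinAt)
    (fun y hy => by
      rw [norm_of_nonneg (cosh_pos y).le, cosh_le_cosh, abs_of_nonneg hy.1,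
        abs_of_nonneg ((abs_nonneg x).trans hx)]
      exact hy.2.le.trans hx) |x| (Set.right_mem_Icc.2 (abs_nonneg x))
  simpa [abs_sinh] using hmvt

lemma abs_sub_sub_mul_le_of_abs_deriv_sub_le {f f' : ℝ → ℝ} {a b m M : ℝ} (hab : a ≤ b)
    (hf : ∀ x ∈ Set.Icc a b, HasDerivAt f (f' x) x) (hM : ∀ x ∈ Set.Ico a b, |f' x - m| ≤ M) :
    |f b - f a - m * (b - a)| ≤ M * (b - a) := by
  have hmvt := norm_image_sub_le_of_norm_deriv_le_segment' (f := fun x => f x - m * x)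
    (fun x hx => ((hf x hx).sub ((hasDerivAt_id x).const_mul m)).hasDerivWithinAt)
    (by simpa using hM) b (Set.right_mem_Icc.2 hab)
  rwa [Real.norm_eq_abs, show f b - m * b - (f a - m * a) = f b - f a - m * (b - a) by ring]
    at hmvt

noncomputable def YcDeriv (c ℓ : ℝ) : ℝ :=
  exp c * (cosh (ℓ / 2) + 1) / ((cosh (ℓ / 2) + 1) ^ 2 + exp c ^ 2 * sinh (ℓ / 2) ^ 2)

lemma Yc_zero (c : ℝ) : Yc c 0 = 0 := by
  simp [Yc]

lemma Yc_eq_two_mul_arctan (c ℓ : ℝ) :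
    Yc c ℓ = 2 * arctan (exp c * (sinh (ℓ / 2) / (cosh (ℓ / 2) + 1))) := by
  rw [Yc, one_div_mul_eq_div, tan_half_arctan_sinh]

lemma hasDerivAt_Yc (c ℓ : ℝ) : HasDerivAt (Yc c) (YcDeriv c ℓ) ℓ := by
  have hq : HasDerivAt (fun x => sinh (x / 2) / (cosh (x / 2) + 1))
      (1 / (cosh (ℓ / 2) + 1) * (1 / 2)) ℓ :=
    (hasDerivAt_sinh_div_cosh_add_one (ℓ / 2)).comp (h := fun x => x / 2) ℓ
      ((hasDerivAt_id' ℓ).div_const 2)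
  rw [show Yc c = _ from funext (Yc_eq_two_mul_arctan c)]
  refine ((hq.const_mul (exp c)).arctan.const_mul 2).congr_deriv ?_
  have hK : cosh (ℓ / 2) + 1 ≠ 0 := by positivity
  rw [YcDeriv]
  field_simp

lemma YcDeriv_sub_half_exp (c ℓ : ℝ) :
    YcDeriv c ℓ - exp c / 2 = -(exp c * (1 + exp c ^ 2) * sinh (ℓ / 2) ^ 2) /
      (2 * ((cosh (ℓ / 2) + 1) ^ 2 + exp c ^ 2 * sinh (ℓ / 2) ^ 2)) := by
  have hD : 0 < (cosh (ℓ / 2) + 1) ^ 2 + exp c ^ 2 * sinh (ℓ / 2) ^ 2 := by positivity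
  rw [YcDeriv]
  field_simp
  linear_combination -cosh_sq_sub_sinh_sq (ℓ / 2)

lemma abs_YcDeriv_sub_half_exp_le (c : ℝ) {ℓ L : ℝ} (hℓ : |ℓ| ≤ L) :
    |YcDeriv c ℓ - exp c / 2| ≤ exp c * (1 + exp c ^ 2) * cosh (L / 2) ^ 2 / 32 * ℓ ^ 2 := by
  have hS : |sinh (ℓ / 2)| ≤ cosh (L / 2) * |ℓ / 2| :=
    abs_sinh_le_cosh_mul_abs (by rw [abs_div, abs_two]; linarith)
  have hS2 : sinh (ℓ / 2) ^ 2 ≤ cosh (L / 2) ^ 2 * (ℓ / 2) ^ 2 := by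
    simpa only [sq_abs, mul_pow] using pow_le_pow_left₀ (abs_nonneg _) hS 2
  have hD : 4 ≤ (cosh (ℓ / 2) + 1) ^ 2 + exp c ^ 2 * sinh (ℓ / 2) ^ 2 := by
    nlinarith [one_le_cosh (ℓ / 2), sq_nonneg (exp c * sinh (ℓ / 2))]
  rw [YcDeriv_sub_half_exp, abs_div, abs_neg, abs_of_nonneg (by positivity),
    abs_of_pos (by positivity)]
  calc exp c * (1 + exp c ^ 2) * sinh (ℓ / 2) ^ 2 /
        (2 * ((cosh (ℓ / 2) + 1) ^ 2 + exp c ^ 2 * sinh (ℓ / 2) ^ 2))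
      ≤ exp c * (1 + exp c ^ 2) * (cosh (L / 2) ^ 2 * (ℓ / 2) ^ 2) / (2 * 4) := by
        gcongr
    _ = exp c * (1 + exp c ^ 2) * cosh (L / 2) ^ 2 / 32 * ℓ ^ 2 := by ring

theorem Yc_expansion_general (c : ℝ) (Lbar : ℝ) :
    ∃ C : ℝ, ∀ ℓ : ℝ, ℓ ∈ Set.Ioc 0 Lbar →
      DifferentiableAt ℝ (Yc c) ℓ ∧
      |Yc c ℓ - Real.exp c * ℓ / 2| ≤ C * ℓ ^ 3 ∧
      |deriv (Yc c) ℓ - Real.exp c / 2| ≤ C * ℓ ^ 2 := by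
  set C := exp c * (1 + exp c ^ 2) * cosh (Lbar / 2) ^ 2 / 32
  have hderiv : ∀ x ∈ Set.Icc 0 Lbar, |YcDeriv c x - exp c / 2| ≤ C * x ^ 2 := fun x hx =>
    abs_YcDeriv_sub_half_exp_le c (by rw [abs_of_nonneg hx.1]; exact hx.2)
  refine ⟨C, fun ℓ ⟨hℓ, hℓL⟩ => ⟨(hasDerivAt_Yc c ℓ).differentiableAt, ?_, ?_⟩⟩
  · have hmvt := abs_sub_sub_mul_le_of_abs_deriv_sub_le hℓ.le (fun x _ => hasDerivAt_Yc c x)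
      (M := C * ℓ ^ 2) fun x hx => (hderiv x ⟨hx.1, hx.2.le.trans hℓL⟩).trans <| by
        gcongr
        exacts [hx.1, hx.2.le]
    calc |Yc c ℓ - exp c * ℓ / 2| = |Yc c ℓ - Yc c 0 - exp c / 2 * (ℓ - 0)| := by
          rw [Yc_zero]
          ring_nf
      _ ≤ C * ℓ ^ 2 * (ℓ - 0) := hmvt
      _ = C * ℓ ^ 3 := by ring
  · rw [(hasDerivAt_Yc c ℓ).deriv]
    exact hderiv ℓ ⟨hℓ.le, hℓL⟩

/-- `Y_c` is differentiable with `|Y_c(ℓ) − e^c ℓ/2| ≤ C ℓ³` and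
`|Y_c′(ℓ) − e^c/2| ≤ C ℓ²` for `ℓ ∈ (0, L̄]`. -/
theorem Yc_expansion (c : ℝ) (hc : 0 < c) (Lbar : ℝ) (hL : 0 < Lbar) :
    ∃ C : ℝ, ∀ ℓ : ℝ, ℓ ∈ Set.Ioc 0 Lbar →
      DifferentiableAt ℝ (Yc c) ℓ ∧
      |Yc c ℓ - Real.exp c * ℓ / 2| ≤ C * ℓ ^ 3 ∧
      |deriv (Yc c) ℓ - Real.exp c / 2| ≤ C * ℓ ^ 2 :=
  Yc_expansion_general c Lbar
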